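/- Let n ≥ 2 and p > q > 0. Consider a cycle (b_1,…,b_n) of lattice vectors, each of the form ±q·e_{j_i} ± p·e_{j_{i+1}} with j_1,…,j_n a permutation of [1,n] (indices cyclic). If C = (b_1,…,b_n) is the matrix with these columns, then |det(C)| = p^n + q^n. -/

import Mathlib

/-!
Permuting the rows by `j⁻¹` changes the determinant only by a sign and turns `C` into a cyclic
bidiagonal matrix, with `-xᵢ q` on the diagonal and `yᵢ p` on the cyclic subdiagonal. In the
Leibniz expansion of such a matrix only the identity and the full rotation have nonzero products,
so its determinant is `∏ aᵢ + (-1)ⁿ⁻¹ ∏ bᵢ`. Since `∏ yᵢ = -∏ xᵢ`, both terms carry the same sign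
`(-1)ⁿ ∏ xᵢ = ±1`, and `|det C| = pⁿ + qⁿ`.
-/

open Finset Equiv Matrix

open Fin.NatCast in
-- Once some `i` moves to `i + 1`, injectivity forces `i + 1` to move to `i + 2`, and so on around
-- the cycle.
theorem Fin.perm_eq_one_or_eq_finRotate {n : ℕ} (σ : Perm (Fin (n + 1)))
    (h : ∀ i, σ i = i ∨ σ i = i + 1) : σ = 1 ∨ σ = finRotate (n + 1) := by
  by_cases hfix : ∀ i, σ i = i
  · exact Or.inl (Equiv.ext hfix)
  right
  push Not at hfix
  obtain ⟨i, hi⟩ := hfix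
  have hstep : ∀ k, σ k = k + 1 → σ (k + 1) = k + 1 + 1 := by
    intro k hk
    rcases h (k + 1) with hfixed | hmoved
    · have hk1 : k + 1 = k := σ.injective (hfixed.trans hk.symm)
      exact hfixed.trans (congrArg (· + 1) hk1).symm
    · exact hmoved
  have hfrom_i : ∀ m : ℕ, σ (i + m) = i + m + 1 := by
    intro m
    induction m with
    | zero => simpa using (h i).resolve_left hi
    | succ m ih => simpa [Nat.cast_succ, add_assoc] using hstep _ ih
  refine Equiv.ext fun k => ?_
  simpa [Fin.cast_val_eq_self, finRotate_apply] using hfrom_i (k - i : Fin (n + 1))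

variable {R : Type*} [CommRing R]

def cyclicBidiagonal {n : ℕ} (a b : Fin (n + 1) → R) : Matrix (Fin (n + 1)) (Fin (n + 1)) R :=
  of fun r i => (if r = i then a i else 0) + if r = i + 1 then b i else 0

theorem det_cyclicBidiagonal {n : ℕ} (a b : Fin (n + 1) → R) :
    (cyclicBidiagonal a b).det = ∏ i, a i + (-1) ^ n * ∏ i, b i := by
  rcases n with _ | n
  · simp [cyclicBidiagonal, det_unique]
  have h_one_ne : (1 : Perm (Fin (n + 2))) ≠ finRotate (n + 2) := fun h => by
    simpa using congrArg (· 0) h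
  rw [det_apply', ← sum_subset (subset_univ {1, finRotate (n + 2)}), sum_pair h_one_ne]
  · simp [cyclicBidiagonal, sign_finRotate]
  · intro σ _ hσ
    simp only [mem_insert, mem_singleton, not_or] at hσ
    obtain ⟨i, hi⟩ : ∃ i, σ i ≠ i ∧ σ i ≠ i + 1 := by
      by_contra! hσ'
      rcases Fin.perm_eq_one_or_eq_finRotate σ fun i => or_iff_not_imp_left.2 (hσ' i) with h | h
      exacts [hσ.1 h, hσ.2 h]
    rw [prod_eq_zero (mem_univ i) (by simp [cyclicBidiagonal, hi.1, hi.2]), mul_zero]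

theorem Fin.prod_shift_neg_wrap {n : ℕ} (x : Fin (n + 1) → R) :
    ∏ i : Fin (n + 1), (if (i : ℕ) + 1 = n + 1 then -x 0 else x (i + 1)) = -∏ i, x i := by
  rw [Fin.prod_univ_castSucc, Fin.prod_univ_succ]
  simp [Fin.coeSucc_eq_succ, mul_comm, (Fin.is_lt _).ne]

/-- The determinant of a cyclic matrix whose `i`-th column is
`−x_i·q·e_{j(i)} + x_{i+1}·p·e_{j(i+1)}` (indices cyclic, with the sign flipping
to `−x_1` upon wrapping around, as in the construction `S·C = A`), where
`j` is a permutation of the indices and the `x_i` are signs, has absolute value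
`pⁿ + qⁿ`. -/
theorem abs_det_cycle_matrix (n : ℕ) (hn : 2 ≤ n) (p q : ℝ) (hq : 0 < q) (hqp : q < p)
    (x : Fin n → ℝ) (hx : ∀ i, x i = 1 ∨ x i = -1) (j : Equiv.Perm (Fin n)) :
    |(Matrix.of fun r i : Fin n =>
        -(x i) * q * (if r = j i then 1 else 0) +
          (if (i : ℕ) + 1 = n then -(x ⟨0, by omega⟩) else x (i + ⟨1, by omega⟩)) * p *
            (if r = j (i + ⟨1, by omega⟩) then 1 else 0)).det| = p ^ n + q ^ n := by
  obtain ⟨m, rfl⟩ : ∃ m, n = m + 1 + 1 := ⟨n - 2, by omega⟩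
  set y : Fin (m + 1 + 1) → ℝ := fun i => if (i : ℕ) + 1 = m + 1 + 1 then -x 0 else x (i + 1)
  have hcolumns : (Matrix.of fun r i : Fin (m + 1 + 1) =>
        -(x i) * q * (if r = j i then 1 else 0) +
          (if (i : ℕ) + 1 = m + 1 + 1 then -(x ⟨0, by omega⟩) else x (i + ⟨1, by omega⟩)) * p *
            (if r = j (i + ⟨1, by omega⟩) then 1 else 0)) =
      (cyclicBidiagonal (fun i => -x i * q) fun i => y i * p).submatrix ⇑j⁻¹ id := by
    ext r i
    simp only [of_apply, submatrix_apply, id_eq, cyclicBidiagonal, y, Perm.inv_eq_iff_eq,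
      Fin.mk_zero, Fin.mk_one]
    split_ifs <;> simp_all
  have hx_abs : |∏ i, x i| = 1 := by
    rw [abs_prod]
    exact prod_eq_one fun i _ => by rcases hx i with h | h <;> simp [h]
  have hp : 0 < p := hq.trans hqp
  have hdet : (cyclicBidiagonal (fun i => -x i * q) fun i => y i * p).det =
      (-1) ^ (m + 1 + 1) * (∏ i, x i) * (p ^ (m + 1 + 1) + q ^ (m + 1 + 1)) := by
    rw [det_cyclicBidiagonal, prod_mul_distrib, prod_mul_distrib, Fin.prod_shift_neg_wrap, prod_neg]
    simp only [prod_const, card_univ, Fintype.card_fin]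
    ring
  rw [hcolumns, det_permute, hdet]
  simp only [abs_mul, abs_pow, abs_neg, abs_one, one_pow, hx_abs, ← Int.cast_abs, Perm.sign_abs,
    Int.cast_one, one_mul]
  exact abs_of_pos (by positivity)
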